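/- arXiv:0709.0378 — 4 statements merged into one kernel-verified Lean document; each statement's English description precedes it below -/
import Mathlib

section
/- If under the spiral model dynamics the origin is occupied and both its North-East occupied cluster and its South-West occupied cluster are infinite, then the origin is never emptied: η_t(0) = 1 for all t ≥ 0, where η_t = T^t η₀. -/
open scoped Classical ENNReal

/-- A site of the two-dimensional lattice. -/
abbrev Site : Type := ℤ × ℤ
/-- A configuration: `true` = occupied, `false` = empty. -/
abbrev Config : Type := Site → Bool

def e1 : Site := (1, 0)
def e2 : Site := (0, 1)

/-- Both sites `a` and `b` are empty in `η`. -/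
def emptyPair (η : Config) (a b : Site) : Prop := η a = false ∧ η b = false

/-- The spiral model constraint `𝒜ₓ`: (both NE or both SW neighbours empty) and
(both NW or both SE neighbours empty). -/
def constraintA (η : Config) (x : Site) : Prop :=
  (emptyPair η (x + e2) (x + e1 + e2) ∨ emptyPair η (x - e2) (x - e1 - e2)) ∧
  (emptyPair η (x - e1) (x - e1 + e2) ∨ emptyPair η (x + e1) (x + e1 - e2))

/-- The spiral model update operator: an occupied site is emptied iff the constraint holds;
empty sites stay empty. -/
noncomputable def T (η : Config) : Config := fun x =>
  if η x = true ∧ ¬ constraintA η x then true else false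

/-- `μ` is the Bernoulli(ρ) product measure: every finite cylinder event has the product
probability. -/
def IsBernoulli (ρ : ℝ) (μ : MeasureTheory.Measure Config) : Prop :=
  ∀ (s : Finset Site) (f : Site → Bool),
    μ {η | ∀ x ∈ s, η x = f x} =
      ∏ x ∈ s, ENNReal.ofReal (if f x then ρ else 1 - ρ)

/-- One step of a North-East occupied path: `b ∈ {a+e₂, a+e₁+e₂}` and `b` occupied. -/
def NEstep (η : Config) (a b : Site) : Prop :=
  (b = a + e2 ∨ b = a + e1 + e2) ∧ η b = true

/-- One step of a South-West occupied path. -/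
def SWstep (η : Config) (a b : Site) : Prop :=
  (b = a - e2 ∨ b = a - e1 - e2) ∧ η b = true

/-- One step of an oriented-percolation occupied path: steps `e₁` or `e₂`. -/
def OPstep (η : Config) (a b : Site) : Prop :=
  (b = a + e1 ∨ b = a + e2) ∧ η b = true

/-- `y` is reachable from `x` by an occupied NE path (all sites occupied, including `x`). -/
def reachNE (η : Config) (x y : Site) : Prop :=
  η x = true ∧ Relation.ReflTransGen (NEstep η) x y

def reachSW (η : Config) (x y : Site) : Prop :=
  η x = true ∧ Relation.ReflTransGen (SWstep η) x y

def reachOP (η : Config) (x y : Site) : Prop :=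
  η x = true ∧ Relation.ReflTransGen (OPstep η) x y

/-- The NE occupied cluster of `x`. -/
def clusterNE (η : Config) (x : Site) : Set Site := {y | reachNE η x y}

def clusterSW (η : Config) (x : Site) : Set Site := {y | reachSW η x y}

def clusterOP (η : Config) (x : Site) : Set Site := {y | reachOP η x y}

/-! ### Auxiliary lemmas -/

/-- A site with both infinite NE and SW occupied clusters. -/
def Frozen (η : Config) (x : Site) : Prop :=
  (clusterNE η x).Infinite ∧ (clusterSW η x).Infinite

lemma occupied_of_NE_nonempty {η : Config} {x : Site}
    (h : (clusterNE η x).Nonempty) : η x = true := by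
  obtain ⟨y, hy⟩ := h; exact hy.1

lemma occupied_of_SW_nonempty {η : Config} {x : Site}
    (h : (clusterSW η x).Nonempty) : η x = true := by
  obtain ⟨y, hy⟩ := h; exact hy.1

lemma Frozen.occupied {η : Config} {x : Site} (h : Frozen η x) : η x = true :=
  occupied_of_NE_nonempty h.1.nonempty

lemma clusterNE_subset_step (η : Config) (x : Site) :
    clusterNE η x ⊆ {x} ∪ (clusterNE η (x + e2) ∪ clusterNE η (x + e1 + e2)) := by
  rintro z ⟨hx, hz⟩
  rcases Relation.ReflTransGen.cases_head hz with rfl | ⟨b, hb, hbz⟩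
  · exact Or.inl rfl
  · rcases hb.1 with rfl | rfl
    · exact Or.inr (Or.inl ⟨hb.2, hbz⟩)
    · exact Or.inr (Or.inr ⟨hb.2, hbz⟩)

lemma clusterSW_subset_step (η : Config) (x : Site) :
    clusterSW η x ⊆ {x} ∪ (clusterSW η (x - e2) ∪ clusterSW η (x - e1 - e2)) := by
  rintro z ⟨hx, hz⟩
  rcases Relation.ReflTransGen.cases_head hz with rfl | ⟨b, hb, hbz⟩
  · exact Or.inl rfl
  · rcases hb.1 with rfl | rfl
    · exact Or.inr (Or.inl ⟨hb.2, hbz⟩)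
    · exact Or.inr (Or.inr ⟨hb.2, hbz⟩)

lemma NE_exists_step {η : Config} {x : Site} (h : (clusterNE η x).Infinite) :
    ∃ b, (b = x + e2 ∨ b = x + e1 + e2) ∧ (clusterNE η b).Infinite := by
  have h2 := Set.Infinite.mono (clusterNE_subset_step η x) h
  rcases Set.infinite_union.mp h2 with h3 | h3
  · exact absurd h3 (Set.finite_singleton x).not_infinite
  rcases Set.infinite_union.mp h3 with h4 | h4
  · exact ⟨_, Or.inl rfl, h4⟩
  · exact ⟨_, Or.inr rfl, h4⟩

lemma SW_exists_step {η : Config} {x : Site} (h : (clusterSW η x).Infinite) :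
    ∃ b, (b = x - e2 ∨ b = x - e1 - e2) ∧ (clusterSW η b).Infinite := by
  have h2 := Set.Infinite.mono (clusterSW_subset_step η x) h
  rcases Set.infinite_union.mp h2 with h3 | h3
  · exact absurd h3 (Set.finite_singleton x).not_infinite
  rcases Set.infinite_union.mp h3 with h4 | h4
  · exact ⟨_, Or.inl rfl, h4⟩
  · exact ⟨_, Or.inr rfl, h4⟩

/-- Reversing an NE step gives a SW step. -/
lemma SWstep_of_NEstep {η : Config} {a b : Site}
    (h : NEstep η a b) (ha : η a = true) : SWstep η b a := by
  rcases h.1 with rfl | rfl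
  · exact ⟨Or.inl (by abel), ha⟩
  · exact ⟨Or.inr (by abel), ha⟩

lemma NEstep_of_SWstep {η : Config} {a b : Site}
    (h : SWstep η a b) (ha : η a = true) : NEstep η b a := by
  rcases h.1 with rfl | rfl
  · exact ⟨Or.inl (by abel), ha⟩
  · exact ⟨Or.inr (by abel), ha⟩

lemma clusterSW_mono_of_step {η : Config} {b x : Site}
    (hb : η b = true) (hstep : SWstep η b x) :
    clusterSW η x ⊆ clusterSW η b := by
  rintro z ⟨hx, hz⟩
  exact ⟨hb, Relation.ReflTransGen.head hstep hz⟩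

lemma clusterNE_mono_of_step {η : Config} {b x : Site}
    (hb : η b = true) (hstep : NEstep η b x) :
    clusterNE η x ⊆ clusterNE η b := by
  rintro z ⟨hx, hz⟩
  exact ⟨hb, Relation.ReflTransGen.head hstep hz⟩

/-- From a frozen site there is an NE step to a frozen site. -/
lemma Frozen.stepNE {η : Config} {x : Site} (h : Frozen η x) :
    ∃ b, NEstep η x b ∧ Frozen η b := by
  obtain ⟨b, hmem, hinf⟩ := NE_exists_step h.1
  have hb : η b = true := occupied_of_NE_nonempty hinf.nonempty
  have hstep : NEstep η x b := ⟨hmem, hb⟩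
  have hsw : SWstep η b x := SWstep_of_NEstep hstep h.occupied
  exact ⟨b, hstep, hinf, h.2.mono (clusterSW_mono_of_step hb hsw)⟩

lemma Frozen.stepSW {η : Config} {x : Site} (h : Frozen η x) :
    ∃ b, SWstep η x b ∧ Frozen η b := by
  obtain ⟨b, hmem, hinf⟩ := SW_exists_step h.2
  have hb : η b = true := occupied_of_SW_nonempty hinf.nonempty
  have hstep : SWstep η x b := ⟨hmem, hb⟩
  have hne : NEstep η b x := NEstep_of_SWstep hstep h.occupied
  exact ⟨b, hstep, h.1.mono (clusterNE_mono_of_step hb hne), hinf⟩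

/-- A frozen site survives one update. -/
lemma Frozen.survives {η : Config} {x : Site} (h : Frozen η x) :
    T η x = true := by
  obtain ⟨b, hbstep, -⟩ := h.stepNE
  obtain ⟨c, hcstep, -⟩ := h.stepSW
  have hnc : ¬ constraintA η x := by
    rintro ⟨h1, -⟩
    rcases h1 with ⟨he1, he2⟩ | ⟨he1, he2⟩
    · rcases hbstep.1 with rfl | rfl
      · rw [hbstep.2] at he1; exact Bool.noConfusion he1
      · rw [hbstep.2] at he2; exact Bool.noConfusion he2
    · rcases hcstep.1 with rfl | rfl
      · rw [hcstep.2] at he1; exact Bool.noConfusion he1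
      · rw [hcstep.2] at he2; exact Bool.noConfusion he2
  simp only [T, if_pos (And.intro h.occupied hnc)]

/-- A chain of sites satisfying a predicate, following a relation. -/
noncomputable def chain {P : Site → Prop} {R : Site → Site → Prop}
    (h : ∀ y, P y → ∃ b, R y b ∧ P b) (x : Site) (hx : P x) : ℕ → {y : Site // P y}
  | 0 => ⟨x, hx⟩
  | n + 1 => ⟨(h _ (chain h x hx n).2).choose, (h _ (chain h x hx n).2).choose_spec.2⟩

lemma chain_step {P : Site → Prop} {R : Site → Site → Prop}
    (h : ∀ y, P y → ∃ b, R y b ∧ P b) (x : Site) (hx : P x) (n : ℕ) :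
    R (chain h x hx n).1 (chain h x hx (n + 1)).1 :=
  (h _ (chain h x hx n).2).choose_spec.1

lemma NEstep_snd {η : Config} {a b : Site} (h : NEstep η a b) : b.2 = a.2 + 1 := by
  rcases h.1 with rfl | rfl <;> simp [e1, e2]

lemma SWstep_snd {η : Config} {a b : Site} (h : SWstep η a b) : b.2 = a.2 - 1 := by
  rcases h.1 with rfl | rfl <;> simp [e1, e2]

/-- Freezing is preserved by the update. -/
lemma Frozen.persists {η : Config} {x : Site} (h : Frozen η x) :
    Frozen (T η) x := by
  constructor
  · -- NE cluster of T η still infinite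
    have hmem : ∀ n, (chain (fun y hy => hy.stepNE) x h n).1 ∈ clusterNE (T η) x := by
      intro n
      induction n with
      | zero => exact ⟨h.survives, Relation.ReflTransGen.refl⟩
      | succ n ih =>
        refine ⟨h.survives, ih.2.tail ?_⟩
        have hs := chain_step (fun y hy => hy.stepNE) x h n
        exact ⟨hs.1, (chain (fun y hy => hy.stepNE) x h (n + 1)).2.survives⟩
    have hsnd : ∀ n, ((chain (fun y hy => hy.stepNE) x h n).1).2 = x.2 + n := by
      intro n
      induction n with
      | zero => simp [chain]
      | succ n ih =>
        have hs := chain_step (fun y hy => hy.stepNE) x h n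
        have h2 := NEstep_snd hs
        omega
    refine Set.infinite_of_injective_forall_mem
      (f := fun n => (chain (fun y hy => hy.stepNE) x h n).1) ?_ hmem
    intro m n hmn
    simp only at hmn
    have h1 := hsnd m; have h2 := hsnd n
    rw [hmn] at h1; omega
  · -- SW cluster of T η still infinite
    have hmem : ∀ n, (chain (fun y hy => hy.stepSW) x h n).1 ∈ clusterSW (T η) x := by
      intro n
      induction n with
      | zero => exact ⟨h.survives, Relation.ReflTransGen.refl⟩
      | succ n ih =>
        refine ⟨h.survives, ih.2.tail ?_⟩
        have hs := chain_step (fun y hy => hy.stepSW) x h n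
        exact ⟨hs.1, (chain (fun y hy => hy.stepSW) x h (n + 1)).2.survives⟩
    have hsnd : ∀ n, ((chain (fun y hy => hy.stepSW) x h n).1).2 = x.2 - n := by
      intro n
      induction n with
      | zero => simp [chain]
      | succ n ih =>
        have hs := chain_step (fun y hy => hy.stepSW) x h n
        have h2 := SWstep_snd hs
        omega
    refine Set.infinite_of_injective_forall_mem
      (f := fun n => (chain (fun y hy => hy.stepSW) x h n).1) ?_ hmem
    intro m n hmn
    simp only at hmn
    have h1 := hsnd m; have h2 := hsnd n
    rw [hmn] at h1; omega

theorem origin_frozen_of_infinite_NE_SW (η : Config)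
    (h0 : η (0, 0) = true)
    (hNE : (clusterNE η (0, 0)).Infinite)
    (hSW : (clusterSW η (0, 0)).Infinite) :
    ∀ t : ℕ, (T^[t] η) (0, 0) = true := by
  have key : ∀ t : ℕ, Frozen (T^[t] η) (0, 0) := by
    intro t
    induction t with
    | zero => exact ⟨hNE, hSW⟩
    | succ t ih =>
      rw [Function.iterate_succ_apply']
      exact ih.persists
  intro t
  exact (key t).occupied
end

section
/- For the spiral model on the region R_{a,b} (a parallelogram of a·b sites obtained by stacking b copies of a horizontal segment of length a, each shifted by e₁+e₂), if the boundary set ∂R_{a,b} (consisting of the segment below the bottom row shifted by −e₁−e₂, and a two-site-wide staircase along the right side) is entirely empty, then after at most a·b steps of the dynamics the whole region R_{a,b} is empty: T^{ab}η ∈ 𝒱_{R_{a,b}}. -/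
open scoped Classical ENNReal

/-- The region `R_{a,b}`: `b` copies of the horizontal segment `S_a` of length `a`,
each shifted by `e₁+e₂`. Row `i` is `{(j+i, i) : 0 ≤ j < a}`. -/
def Rab (a b : ℕ) : Set Site :=
  {p | ∃ i j : ℕ, i < b ∧ j < a ∧ p = ((j : ℤ) + i, (i : ℤ))}

/-- The boundary `∂R_{a,b}`: the segment `S_a − e₂ − e₁`, the site `a e₁ + (b−1)(e₁+e₂)`,
and the staircase `⋃_{i=1}^{b} (S₂ + a e₁ + (i−2)(e₁+e₂))`. -/
def bdryRab (a b : ℕ) : Set Site :=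
  {p | ∃ j : ℕ, j < a ∧ p = ((j : ℤ) - 1, -1)} ∪
  {(((a : ℤ) + b - 1), ((b : ℤ) - 1))} ∪
  {p | ∃ i : ℕ, 1 ≤ i ∧ i ≤ b ∧
    (p = ((a : ℤ) + i - 2, (i : ℤ) - 2) ∨ p = ((a : ℤ) + i - 1, (i : ℤ) - 2))}

lemma T_empty {η : Config} {p : Site} (hp : η p = false) : T η p = false := by
  simp [T, hp]

lemma T_constraint {η : Config} {p : Site} (hp : constraintA η p) : T η p = false := by
  simp [T, hp]

lemma mem_bot {a b j : ℕ} (hj : j < a) : ((j:ℤ) - 1, (-1:ℤ)) ∈ bdryRab a b :=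
  Or.inl (Or.inl ⟨j, hj, rfl⟩)

lemma mem_stair1 {a b i : ℕ} (h1 : 1 ≤ i) (h2 : i ≤ b) :
    ((a:ℤ) + i - 2, (i:ℤ) - 2) ∈ bdryRab a b :=
  Or.inr ⟨i, h1, h2, Or.inl rfl⟩

lemma mem_stair2 {a b i : ℕ} (h1 : 1 ≤ i) (h2 : i ≤ b) :
    ((a:ℤ) + i - 1, (i:ℤ) - 2) ∈ bdryRab a b :=
  Or.inr ⟨i, h1, h2, Or.inr rfl⟩

lemma mem_corner {a b : ℕ} : (((a:ℤ) + b - 1), ((b:ℤ) - 1)) ∈ bdryRab a b :=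
  Or.inl (Or.inr rfl)

/-- The key step: if the boundary is empty and all sites of index `< k` (row-major
from the bottom, right-to-left in each row) are empty, then the constraint holds at
the site of index `k`. -/
lemma constraint_at_next (a b : ℕ) (η : Config)
    (hB : ∀ p ∈ bdryRab a b, η p = false)
    (i j : ℕ) (hi : i < b) (hj : j < a)
    (hS : ∀ i' j' : ℕ, i' < b → j' < a →
      i' * a + (a - 1 - j') < i * a + (a - 1 - j) → η ((j':ℤ) + i', (i':ℤ)) = false) :
    constraintA η ((j:ℤ) + i, (i:ℤ)) := by
  have key : ∀ q : Site,
      (q ∈ bdryRab a b ∨ ∃ i' j' : ℕ, i' < b ∧ j' < a ∧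
        i' * a + (a - 1 - j') < i * a + (a - 1 - j) ∧ q = ((j':ℤ) + i', (i':ℤ))) →
      η q = false := by
    rintro q (hq | ⟨i', j', h1, h2, h3, rfl⟩)
    · exact hB q hq
    · exact hS i' j' h1 h2 h3
  refine ⟨Or.inr ⟨?_, ?_⟩, Or.inr ⟨?_, ?_⟩⟩
  -- SW pair: x - e2 = (j+i, i-1)
  · rw [show (((j:ℤ) + i, (i:ℤ)) : Site) - e2 = ((j:ℤ)+i, (i:ℤ)-1) by
      simp [e2, Prod.ext_iff]]
    apply key
    rcases Nat.eq_zero_or_pos i with hi0 | hi1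
    · subst hi0
      rcases Nat.lt_or_ge j (a-1) with hja | hja
      · refine Or.inl ?_
        rw [show (((j:ℤ)+(0:ℕ), ((0:ℕ):ℤ)-1) : Site) = (((j+1:ℕ):ℤ) - 1, (-1:ℤ)) by
          simp [Prod.ext_iff] <;> omega]
        exact mem_bot (by omega)
      · -- j = a - 1 : staircase i' = 1, first point
        refine Or.inl ?_
        rw [show (((j:ℤ)+(0:ℕ), ((0:ℕ):ℤ)-1) : Site) = ((a:ℤ) + (1:ℕ) - 2, ((1:ℕ):ℤ) - 2) by
          simp [Prod.ext_iff]; omega]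
        exact mem_stair1 le_rfl (by omega)
    · obtain ⟨i₀, rfl⟩ : ∃ i₀, i = i₀ + 1 := ⟨i - 1, by omega⟩
      rcases Nat.lt_or_ge j (a-1) with hja | hja
      · refine Or.inr ⟨i₀, j+1, by omega, by omega, ?_, ?_⟩
        · have hx : (i₀+1) * a = i₀ * a + a := by ring
          omega
        · simp [Prod.ext_iff] <;> omega
      ·
        refine Or.inl ?_
        rw [show (((j:ℤ)+(i₀+1:ℕ), ((i₀+1:ℕ):ℤ)-1) : Site)
            = ((a:ℤ) + (i₀+2:ℕ) - 2, ((i₀+2:ℕ):ℤ) - 2) by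
          simp [Prod.ext_iff]; omega]
        exact mem_stair1 (by omega) (by omega)
  -- SW pair: x - e1 - e2 = (j+i-1, i-1)
  · rw [show (((j:ℤ) + i, (i:ℤ)) : Site) - e1 - e2 = ((j:ℤ)+i-1, (i:ℤ)-1) by
      simp [e1, e2, Prod.ext_iff]]
    apply key
    rcases Nat.eq_zero_or_pos i with hi0 | hi1
    · subst hi0
      refine Or.inl ?_
      rw [show (((j:ℤ)+(0:ℕ)-1, ((0:ℕ):ℤ)-1) : Site) = ((j:ℤ) - 1, (-1:ℤ)) by
        simp [Prod.ext_iff]]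
      exact mem_bot hj
    · obtain ⟨i₀, rfl⟩ : ∃ i₀, i = i₀ + 1 := ⟨i - 1, by omega⟩
      refine Or.inr ⟨i₀, j, by omega, hj, ?_, ?_⟩
      · have hx : (i₀+1) * a = i₀ * a + a := by ring
        omega
      · simp [Prod.ext_iff] <;> omega
  -- SE pair: x + e1 = (j+i+1, i)
  · rw [show (((j:ℤ) + i, (i:ℤ)) : Site) + e1 = ((j:ℤ)+i+1, (i:ℤ)) by
      simp [e1, Prod.ext_iff]]
    apply key
    rcases Nat.lt_or_ge j (a-1) with hja | hja
    · refine Or.inr ⟨i, j+1, hi, by omega, by omega, ?_⟩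
      simp [Prod.ext_iff] <;> omega
    · -- j = a-1
      rcases Nat.lt_or_ge i (b-1) with hib | hib
      · refine Or.inl ?_
        rw [show (((j:ℤ)+i+1, (i:ℤ)) : Site) = ((a:ℤ) + (i+2:ℕ) - 2, ((i+2:ℕ):ℤ) - 2) by
          simp [Prod.ext_iff]; omega]
        exact mem_stair1 (by omega) (by omega)
      · -- i = b-1 : corner
        refine Or.inl ?_
        rw [show (((j:ℤ)+i+1, (i:ℤ)) : Site) = (((a:ℤ) + b - 1), ((b:ℤ) - 1)) by
          simp [Prod.ext_iff]; omega]
        exact mem_corner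
  -- SE pair: x + e1 - e2 = (j+i+1, i-1)
  · rw [show (((j:ℤ) + i, (i:ℤ)) : Site) + e1 - e2 = ((j:ℤ)+i+1, (i:ℤ)-1) by
      simp [e1, e2, Prod.ext_iff]]
    apply key
    rcases Nat.eq_zero_or_pos i with hi0 | hi1
    · subst hi0
      rcases Nat.lt_or_ge j (a-2) with hja | hja
      · refine Or.inl ?_
        rw [show (((j:ℤ)+(0:ℕ)+1, ((0:ℕ):ℤ)-1) : Site) = (((j+2:ℕ):ℤ) - 1, (-1:ℤ)) by
          simp [Prod.ext_iff] <;> omega]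
        exact mem_bot (by omega)
      · rcases Nat.lt_or_ge j (a-1) with hja2 | hja2
        · -- j = a-2
          refine Or.inl ?_
          rw [show (((j:ℤ)+(0:ℕ)+1, ((0:ℕ):ℤ)-1) : Site)
              = ((a:ℤ) + (1:ℕ) - 2, ((1:ℕ):ℤ) - 2) by simp [Prod.ext_iff]; omega]
          exact mem_stair1 le_rfl (by omega)
        · -- j = a-1
          refine Or.inl ?_
          rw [show (((j:ℤ)+(0:ℕ)+1, ((0:ℕ):ℤ)-1) : Site)
              = ((a:ℤ) + (1:ℕ) - 1, ((1:ℕ):ℤ) - 2) by simp [Prod.ext_iff]; omega]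
          exact mem_stair2 le_rfl (by omega)
    · obtain ⟨i₀, rfl⟩ : ∃ i₀, i = i₀ + 1 := ⟨i - 1, by omega⟩
      rcases Nat.lt_or_ge j (a-2) with hja | hja
      · refine Or.inr ⟨i₀, j+2, by omega, by omega, ?_, ?_⟩
        · have hx : (i₀+1) * a = i₀ * a + a := by ring
          omega
        · simp [Prod.ext_iff] <;> omega
      · rcases Nat.lt_or_ge j (a-1) with hja2 | hja2
        · -- j = a-2 : staircase i' = i₀+2, first point
          refine Or.inl ?_
          rw [show (((j:ℤ)+(i₀+1:ℕ)+1, ((i₀+1:ℕ):ℤ)-1) : Site)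
              = ((a:ℤ) + (i₀+2:ℕ) - 2, ((i₀+2:ℕ):ℤ) - 2) by simp [Prod.ext_iff]; omega]
          exact mem_stair1 (by omega) (by omega)
        · -- j = a-1 : staircase i' = i₀+2, second point
          refine Or.inl ?_
          rw [show (((j:ℤ)+(i₀+1:ℕ)+1, ((i₀+1:ℕ):ℤ)-1) : Site)
              = ((a:ℤ) + (i₀+2:ℕ) - 1, ((i₀+2:ℕ):ℤ) - 2) by simp [Prod.ext_iff]; omega]
          exact mem_stair2 (by omega) (by omega)

lemma invariant (a b : ℕ) (η : Config)
    (h : ∀ p ∈ bdryRab a b, η p = false) :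
    ∀ k : ℕ, (∀ p ∈ bdryRab a b, (T^[k] η) p = false) ∧
      (∀ i j : ℕ, i < b → j < a → i * a + (a - 1 - j) < k →
        (T^[k] η) ((j:ℤ) + i, (i:ℤ)) = false) := by
  intro k
  induction k with
  | zero => exact ⟨h, fun i j _ _ hk => absurd hk (by omega)⟩
  | succ k ih =>
    obtain ⟨ihB, ihS⟩ := ih
    rw [Function.iterate_succ_apply']
    refine ⟨fun p hp => T_empty (ihB p hp), fun i j hi hj hk => ?_⟩
    rcases Nat.lt_or_ge (i * a + (a - 1 - j)) k with hlt | hge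
    · exact T_empty (ihS i j hi hj hlt)
    · have hkeq : i * a + (a - 1 - j) = k := by omega
      apply T_constraint
      apply constraint_at_next a b _ ihB i j hi hj
      intro i' j' h1 h2 h3
      exact ihS i' j' h1 h2 (by omega)

theorem empty_boundary_empties_region (a b : ℕ) (η : Config)
    (h : ∀ p ∈ bdryRab a b, η p = false) :
    ∀ p ∈ Rab a b, (T^[a * b] η) p = false := by
  rintro p ⟨i, j, hi, hj, rfl⟩
  apply (invariant a b η h (a * b)).2 i j hi hj
  have h1 : (i + 1) * a ≤ b * a := Nat.mul_le_mul_right a hi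
  have h2 : (i + 1) * a = i * a + a := by ring
  have h3 : a * b = b * a := Nat.mul_comm a b
  omega
end

section
/- Mutual blocking of perpendicular spanning clusters: let X be an occupied NE path spanning rectangle R₁ = Λ_{a,b} (connecting its two sides parallel to −e₁+e₂), and let Y, Z be occupied NW paths spanning rectangles R₂, R₃ of shape Λ_{c,d} (with 2c < a, d > b) positioned at the two ends of R₁ as described. Then under the spiral model dynamics, the first time τ_{X̃} at which any site of X̃ = X ∖ (R₂ ∪ R₃) becomes empty satisfies τ_{X̃} ≥ τ_{Y∪Z} + 1, where τ_{Y∪Z} is the first time any site of Y ∪ Z becomes empty. -/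
open scoped Classical ENNReal

/-- Tilted rectangle with center `(cu, cv)` in diagonal coordinates `u = x+y`, `v = y−x`,
half-extent `ha` along `e₁+e₂` and `hb` along `−e₁+e₂`. -/
def Rect (cu cv : ℤ) (ha hb : ℕ) : Set Site :=
  {p | |p.1 + p.2 - cu| ≤ (ha : ℤ) ∧ |p.2 - p.1 - cv| ≤ (hb : ℤ)}

/-- The first time at which at least one site of `A` is empty (`⊤` if never). -/
noncomputable def firstEmptyTime (η : Config) (A : Set Site) : ℕ∞ :=
  sInf ((fun m : ℕ => (m : ℕ∞)) '' {m : ℕ | ∃ p ∈ A, (T^[m] η) p = false})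

/-!
The NE path `X` meets the NW path `Y` near its upper end and `Z` near its lower end: a NE and a
NW path spanning a common rectangle cross, at a lattice site or at a half-integer point. On the
stretch of `X` between these crossings every site has its successor on `X` among its two upper
neighbours and its predecessor among its two lower ones; at the two ends `Y` and `Z` take over
this role (or, at a lattice crossing, hold the end site by its NW and SE pairs). So the spiral
constraint fails on the whole stretch, which contains `X ∖ (R₂ ∪ R₃)`, for as long as `Y` and
`Z` stay occupied.
-/

lemma mem_Rect {cu cv : ℤ} {ha hb : ℕ} {p : Site} :
    p ∈ Rect cu cv ha hb ↔ (cu - ha ≤ p.1 + p.2 ∧ p.1 + p.2 ≤ cu + ha) ∧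
      (cv - hb ≤ p.2 - p.1 ∧ p.2 - p.1 ≤ cv + hb) := by
  simp only [Rect, Set.mem_ofPred_eq, abs_le]
  constructor <;> rintro ⟨⟨h1, h2⟩, h3, h4⟩ <;> refine ⟨⟨?_, ?_⟩, ?_, ?_⟩ <;> linarith

def UpSupported (A : Set Site) (x : Site) : Prop := x + e2 ∈ A ∨ x + e1 + e2 ∈ A
def DownSupported (A : Set Site) (x : Site) : Prop := x - e2 ∈ A ∨ x - e1 - e2 ∈ A
def LeftSupported (A : Set Site) (x : Site) : Prop := x - e1 ∈ A ∨ x - e1 + e2 ∈ A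
def RightSupported (A : Set Site) (x : Site) : Prop := x + e1 ∈ A ∨ x + e1 - e2 ∈ A

def Blocked (A : Set Site) (x : Site) : Prop :=
  (UpSupported A x ∧ DownSupported A x) ∨ (LeftSupported A x ∧ RightSupported A x)

lemma not_emptyPair {η : Config} {A : Set Site} (hA : ∀ y ∈ A, η y = true) {p q : Site}
    (h : p ∈ A ∨ q ∈ A) : ¬ emptyPair η p q := by
  rintro ⟨hp, hq⟩
  rcases h with h | h <;> simp_all

lemma not_constraintA_of_blocked {η : Config} {A : Set Site} (hA : ∀ y ∈ A, η y = true)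
    {x : Site} (hx : Blocked A x) : ¬ constraintA η x := by
  rintro ⟨hv, hh⟩
  rcases hx with ⟨hup, hdown⟩ | ⟨hleft, hright⟩
  · exact hv.elim (not_emptyPair hA hup) (not_emptyPair hA hdown)
  · exact hh.elim (not_emptyPair hA hleft) (not_emptyPair hA hright)

lemma T_apply_eq_true {η : Config} {x : Site} :
    T η x = true ↔ η x = true ∧ ¬ constraintA η x := by
  simp [T]

theorem iterate_T_eq_true_of_blocked {S F : Set Site} (hS : ∀ x ∈ S, Blocked (S ∪ F) x)
    {η : Config} (hη : ∀ x ∈ S, η x = true) :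
    ∀ t : ℕ, (∀ s < t, ∀ x ∈ F, T^[s] η x = true) → ∀ x ∈ S, T^[t] η x = true
  | 0, _ => hη
  | t + 1, hF => by
    have hSt := iterate_T_eq_true_of_blocked hS hη t fun s hs => hF s (by omega)
    have hFt := hF t (by omega)
    intro x hx
    rw [Function.iterate_succ_apply', T_apply_eq_true]
    refine ⟨hSt x hx, not_constraintA_of_blocked ?_ (hS x hx)⟩
    rintro y (hy | hy)
    exacts [hSt y hy, hFt y hy]

theorem firstEmptyTime_add_one_le {η : Config} {A B : Set Site}
    (h : ∀ t : ℕ, (∀ s < t, ∀ x ∈ B, T^[s] η x = true) → ∀ x ∈ A, T^[t] η x = true) :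
    firstEmptyTime η B + 1 ≤ firstEmptyTime η A := by
  refine le_sInf ?_
  rintro _ ⟨t, ⟨x, hxA, hx⟩, rfl⟩
  obtain ⟨s, hst, y, hyB, hy⟩ : ∃ s < t, ∃ y ∈ B, T^[s] η y = false := by
    by_contra! H
    simpa [hx] using h t (fun s hs y hy => by simpa using H s hs y hy) x hxA
  calc firstEmptyTime η B + 1 ≤ (s : ℕ∞) + 1 := by
        gcongr
        exact sInf_le ⟨s, ⟨y, hyB, hy⟩, rfl⟩
    _ ≤ t := by exact_mod_cast hst

def IsNEPath (X : ℕ → Site) (n : ℕ) : Prop :=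
  ∀ i < n, X (i + 1) = X i + e2 ∨ X (i + 1) = X i + e1 + e2

def IsNWPath (W : ℕ → Site) (m : ℕ) : Prop :=
  ∀ k < m, W (k + 1) = W k - e1 ∨ W (k + 1) = W k - e1 + e2

def LeftOfPath (X : ℕ → Site) (n : ℕ) (p : Site) : Prop :=
  ∃ i ≤ n, p.1 < (X i).1 ∧ (X i).2 ≤ p.2

namespace IsNWPath

variable {W : ℕ → Site} {m : ℕ} (hW : IsNWPath W m)
include hW

lemma coords_succ {k : ℕ} (hk : k < m) :
    (W (k + 1)).1 = (W k).1 - 1 ∧ ((W (k + 1)).2 = (W k).2 ∨ (W (k + 1)).2 = (W k).2 + 1) := by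
  rcases hW k hk with h | h <;> simp [h, e1, e2]

lemma blocked {A : Set Site} (hA : ∀ j ≤ m, W j ∈ A) {k : ℕ} (hk0 : 0 < k) (hk : k < m) :
    Blocked A (W k) := by
  refine Or.inr ⟨?_, ?_⟩
  · rcases hW k hk with h | h
    exacts [Or.inl (h ▸ hA _ hk), Or.inr (h ▸ hA _ hk)]
  · obtain ⟨k, rfl⟩ : ∃ j, k = j + 1 := ⟨k - 1, by omega⟩
    rcases hW k (by omega) with h | h <;> rw [h]
    · exact Or.inl (by convert hA k (by omega) using 1; abel)
    · exact Or.inr (by convert hA k (by omega) using 1; abel)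

end IsNWPath

namespace IsNEPath

variable {X : ℕ → Site} {n : ℕ} (hX : IsNEPath X n)
include hX

lemma coords_succ {i : ℕ} (hi : i < n) :
    (X (i + 1)).2 = (X i).2 + 1 ∧ ((X (i + 1)).1 = (X i).1 ∨ (X (i + 1)).1 = (X i).1 + 1) := by
  rcases hX i hi with h | h <;> simp [h, e1, e2]

lemma snd_eq : ∀ i ≤ n, (X i).2 = (X 0).2 + i
  | 0, _ => by simp
  | i + 1, hi => by
    have := snd_eq i (by omega)
    have := (hX.coords_succ (by omega : i < n)).1
    push_cast
    omega

lemma fst_mono {i j : ℕ} (hij : i ≤ j) (hj : j ≤ n) : (X i).1 ≤ (X j).1 := by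
  induction j, hij using Nat.le_induction with
  | base => exact le_rfl
  | succ j _ ih =>
    have := hX.coords_succ (by omega : j < n)
    have := ih (by omega)
    omega

lemma fst_add_snd_lt {i j : ℕ} (hij : i < j) (hj : j ≤ n) :
    (X i).1 + (X i).2 < (X j).1 + (X j).2 := by
  have := hX.snd_eq i (by omega)
  have := hX.snd_eq j hj
  have := hX.fst_mono hij.le hj
  omega

lemma upSupported {A : Set Site} {i : ℕ} (hi : i < n) (h : X (i + 1) ∈ A) :
    UpSupported A (X i) := by
  rcases hX i hi with hs | hs
  exacts [Or.inl (hs ▸ h), Or.inr (hs ▸ h)]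

lemma downSupported {A : Set Site} {i : ℕ} (hi : i < n) (h : X i ∈ A) :
    DownSupported A (X (i + 1)) := by
  rcases hX i hi with hs | hs <;> rw [hs]
  · exact Or.inl (by convert h using 1; abel)
  · exact Or.inr (by convert h using 1; abel)

lemma exists_eq_of_not_leftOfPath {p : Site} (hp : ¬ LeftOfPath X n p) {i : ℕ} (hi : i ≤ n)
    (hx : p.1 ≤ (X i).1) (hy : (X i).2 ≤ p.2) (hu : p.1 + p.2 ≤ (X n).1 + (X n).2) :
    ∃ j ≤ n, X j = p := by
  have hXi := hX.snd_eq i hi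
  have hXn := hX.snd_eq n le_rfl
  by_cases htop : p.2 ≤ (X n).2
  · obtain ⟨j, hj⟩ : ∃ j : ℕ, p.2 = (X 0).2 + j := ⟨(p.2 - (X 0).2).toNat, by omega⟩
    have hjn : j ≤ n := by omega
    have := hX.snd_eq j hjn
    have := hX.fst_mono (by omega : i ≤ j) hjn
    have : ¬ (p.1 < (X j).1 ∧ (X j).2 ≤ p.2) := fun h => hp ⟨j, hjn, h⟩
    exact ⟨j, hjn, Prod.ext (by omega) (by omega)⟩
  · exact absurd ⟨n, le_rfl, by omega, by omega⟩ hp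

/-- `W` starts outside the region `LeftOfPath X n` and ends inside it; the step at which it
enters is where it crosses `X`. -/
theorem exists_crossing {W : ℕ → Site} {m : ℕ} (hW : IsNWPath W m)
    (hv : ∀ i ≤ n, (W 0).2 - (W 0).1 < (X i).2 - (X i).1 ∧
      (X i).2 - (X i).1 < (W m).2 - (W m).1)
    (hu : ∀ k ≤ m, (X 0).1 + (X 0).2 ≤ (W k).1 + (W k).2 ∧
      (W k).1 + (W k).2 ≤ (X n).1 + (X n).2) :
    ∃ i ≤ n, ∃ k < m, (0 < k ∧ X i = W k) ∨
      (i < n ∧ X (i + 1) = X i + e1 + e2 ∧ W k = X i + e1 ∧ W (k + 1) = X i + e2) := by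
  obtain ⟨k, hk, hleft⟩ : ∃ k < m, ¬ LeftOfPath X n (W k) ∧ LeftOfPath X n (W (k + 1)) := by
    have h0 : ¬ LeftOfPath X n (W 0) := by
      rintro ⟨i, hi, h⟩
      have := hv i hi
      omega
    have hm : LeftOfPath X n (W m) := by
      have := hv 0 (Nat.zero_le n)
      have := hv n le_rfl
      have := hu m le_rfl
      by_cases htop : (X n).2 ≤ (W m).2
      · exact ⟨n, le_rfl, by omega, htop⟩
      · have := hX.snd_eq n le_rfl
        obtain ⟨j, hj⟩ : ∃ j : ℕ, (W m).2 = (X 0).2 + j := ⟨((W m).2 - (X 0).2).toNat, by omega⟩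
        have := hX.snd_eq j (by omega)
        have := hv j (by omega)
        exact ⟨j, by omega, by omega, by omega⟩
    obtain ⟨k, hk, hk1⟩ := Nat.exists_not_and_succ_of_not_zero_of_exists
      (p := fun k => LeftOfPath X n (W (min k m))) (by simpa using h0) ⟨m, by simpa using hm⟩
    have hkm : k < m := by
      by_contra! h
      rw [min_eq_right h] at hk
      rw [min_eq_right (by omega)] at hk1
      exact hk hk1
    rw [min_eq_left hkm.le] at hk
    rw [min_eq_left hkm] at hk1
    exact ⟨k, hkm, hk, hk1⟩
  obtain ⟨hnot, i, hi, hx, hy⟩ := hleft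
  have lattice : ∀ j ≤ n, (W k).1 ≤ (X j).1 → (X j).2 ≤ (W k).2 →
      ∃ i ≤ n, ∃ k < m, (0 < k ∧ X i = W k) ∨
        (i < n ∧ X (i + 1) = X i + e1 + e2 ∧ W k = X i + e1 ∧ W (k + 1) = X i + e2) := by
    intro j hj hxj hyj
    obtain ⟨j, hj, hXW⟩ := hX.exists_eq_of_not_leftOfPath hnot hj hxj hyj (hu k hk.le).2
    refine ⟨j, hj, k, hk, Or.inl ⟨Nat.pos_of_ne_zero ?_, hXW⟩⟩
    rintro rfl
    have := hv j hj
    rw [hXW] at this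
    omega
  have hWk := hW.coords_succ hk
  by_cases hyk : (X i).2 ≤ (W k).2
  · exact lattice i hi (by omega) hyk
  obtain ⟨i, rfl⟩ : ∃ i', i = i' + 1 := by
    rcases i with _ | i
    · have := (hu k hk.le).1
      omega
    · exact ⟨i, rfl⟩
  have hXi := hX.coords_succ hi
  by_cases hxk : (W k).1 ≤ (X i).1
  · exact lattice i (by omega) hxk (by omega)
  refine ⟨i, by omega, k, hk, Or.inr ⟨hi, ?_, ?_, ?_⟩⟩ <;>
    refine Prod.ext ?_ ?_ <;> simp only [Prod.fst_add, Prod.snd_add, e1, e2] <;> omega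

theorem exists_upper_anchor {W : ℕ → Site} {m : ℕ} (hW : IsNWPath W m)
    (hv : ∀ i ≤ n, (W 0).2 - (W 0).1 < (X i).2 - (X i).1 ∧
      (X i).2 - (X i).1 < (W m).2 - (W m).1)
    (hu : ∀ k ≤ m, (X 0).1 + (X 0).2 ≤ (W k).1 + (W k).2 ∧
      (W k).1 + (W k).2 ≤ (X n).1 + (X n).2) :
    ∃ i ≤ n, ∃ k ≤ m, (W k).1 + (W k).2 ≤ (X i).1 + (X i).2 + 1 ∧
      ∀ A : Set Site, (∀ j ≤ m, W j ∈ A) → Blocked A (X i) ∨ UpSupported A (X i) := by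
  obtain ⟨i, hi, k, hk, ⟨hk0, hXW⟩ | ⟨-, -, hWk, hWk1⟩⟩ := hX.exists_crossing hW hv hu
  · exact ⟨i, hi, k, hk.le, by rw [hXW]; omega,
      fun A hA => Or.inl (hXW ▸ hW.blocked hA hk0 hk)⟩
  · refine ⟨i, hi, k, hk.le, by simp [hWk, e1]; omega, fun A hA => Or.inr (Or.inl ?_)⟩
    exact hWk1 ▸ hA (k + 1) hk

theorem exists_lower_anchor {W : ℕ → Site} {m : ℕ} (hW : IsNWPath W m)
    (hv : ∀ i ≤ n, (W 0).2 - (W 0).1 < (X i).2 - (X i).1 ∧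
      (X i).2 - (X i).1 < (W m).2 - (W m).1)
    (hu : ∀ k ≤ m, (X 0).1 + (X 0).2 ≤ (W k).1 + (W k).2 ∧
      (W k).1 + (W k).2 ≤ (X n).1 + (X n).2) :
    ∃ i ≤ n, ∃ k ≤ m, (X i).1 + (X i).2 ≤ (W k).1 + (W k).2 + 1 ∧
      ∀ A : Set Site, (∀ j ≤ m, W j ∈ A) → Blocked A (X i) ∨ DownSupported A (X i) := by
  obtain ⟨i, hi, k, hk, ⟨hk0, hXW⟩ | ⟨hin, hXi, hWk, -⟩⟩ := hX.exists_crossing hW hv hu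
  · exact ⟨i, hi, k, hk.le, by rw [hXW]; omega,
      fun A hA => Or.inl (hXW ▸ hW.blocked hA hk0 hk)⟩
  · have hdown : X (i + 1) - e2 = W k := by rw [hXi, hWk]; abel
    refine ⟨i + 1, hin, k, hk.le, by simp [hXi, hWk, e1, e2]; omega,
      fun A hA => Or.inr (Or.inl ?_)⟩
    exact hdown ▸ hA k hk.le

theorem blocked_of_anchored {A : Set Site} {lo hi : ℕ} (hhi : hi ≤ n)
    (hA : ∀ j, lo ≤ j → j ≤ hi → X j ∈ A)
    (htop : Blocked A (X hi) ∨ UpSupported A (X hi))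
    (hbot : Blocked A (X lo) ∨ DownSupported A (X lo))
    {j : ℕ} (hlo : lo ≤ j) (hj : j ≤ hi) : Blocked A (X j) := by
  have up : Blocked A (X j) ∨ UpSupported A (X j) := by
    rcases hj.lt_or_eq with hj | rfl
    · exact Or.inr (hX.upSupported (by omega) (hA _ (by omega) hj))
    · exact htop
  have down : Blocked A (X j) ∨ DownSupported A (X j) := by
    rcases hlo.lt_or_eq with hlo | rfl
    · obtain ⟨j, rfl⟩ : ∃ j', j = j' + 1 := ⟨j - 1, by omega⟩
      exact Or.inr (hX.downSupported (by omega) (hA _ (by omega) (by omega)))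
    · exact hbot
  rcases up with h | hup
  · exact h
  rcases down with h | hdown
  · exact h
  exact Or.inl ⟨hup, hdown⟩

end IsNEPath

theorem mutual_blocking_general (a b c d : ℕ) (hc : 2 * c < a) (hd : b < d)
    (η : Config) (n m m' : ℕ) (X Y Z : ℕ → Site)
    -- X : occupied NE path spanning R₁ = Rect 0 0 a b
    (hXstep : ∀ i < n, X (i + 1) = X i + e2 ∨ X (i + 1) = X i + e1 + e2)
    (hXin : ∀ i ≤ n, X i ∈ Rect 0 0 a b)
    (hXocc : ∀ i ≤ n, η (X i) = true)
    (hXend0 : (X 0).1 + (X 0).2 = -(a : ℤ)) (hXendn : (X n).1 + (X n).2 = (a : ℤ))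
    -- Y : occupied NW path spanning R₂ = Rect (a−c) 0 c d
    (hYstep : ∀ i < m, Y (i + 1) = Y i - e1 ∨ Y (i + 1) = Y i - e1 + e2)
    (hYin : ∀ i ≤ m, Y i ∈ Rect ((a : ℤ) - c) 0 c d)
    (hYend0 : (Y 0).2 - (Y 0).1 = -(d : ℤ)) (hYendm : (Y m).2 - (Y m).1 = (d : ℤ))
    -- Z : occupied NW path spanning R₃ = Rect (−(a−c)) 0 c d
    (hZstep : ∀ i < m', Z (i + 1) = Z i - e1 ∨ Z (i + 1) = Z i - e1 + e2)
    (hZin : ∀ i ≤ m', Z i ∈ Rect (-((a : ℤ) - c)) 0 c d)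
    (hZend0 : (Z 0).2 - (Z 0).1 = -(d : ℤ)) (hZendm : (Z m').2 - (Z m').1 = (d : ℤ)) :
    firstEmptyTime η
        ({p | ∃ i ≤ n, p = X i} \ (Rect ((a : ℤ) - c) 0 c d ∪ Rect (-((a : ℤ) - c)) 0 c d)) ≥
      firstEmptyTime η ({p | ∃ i ≤ m, p = Y i} ∪ {p | ∃ i ≤ m', p = Z i}) + 1 := by
  have hX : IsNEPath X n := hXstep
  have hXv (i) (hi : i ≤ n) : -(d : ℤ) < (X i).2 - (X i).1 ∧ (X i).2 - (X i).1 < d := by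
    have := mem_Rect.1 (hXin i hi)
    omega
  obtain ⟨hi, hhi, k, hk, hYk, htop⟩ := hX.exists_upper_anchor hYstep
    (by rwa [hYend0, hYendm]) fun k hk => by have := mem_Rect.1 (hYin k hk); omega
  obtain ⟨lo, hlo, k', hk', hZk', hbot⟩ := hX.exists_lower_anchor hZstep
    (by rwa [hZend0, hZendm]) fun k hk => by have := mem_Rect.1 (hZin k hk); omega
  set F := {p | ∃ i ≤ m, p = Y i} ∪ {p | ∃ i ≤ m', p = Z i}
  set S := {p | ∃ j, lo ≤ j ∧ j ≤ hi ∧ p = X j}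
  have hS : ∀ x ∈ S, Blocked (S ∪ F) x := by
    have hY : ∀ j ≤ m, Y j ∈ S ∪ F := fun j hj => Or.inr (Or.inl ⟨j, hj, rfl⟩)
    have hZ : ∀ j ≤ m', Z j ∈ S ∪ F := fun j hj => Or.inr (Or.inr ⟨j, hj, rfl⟩)
    rintro _ ⟨j, hlo, hj, rfl⟩
    exact hX.blocked_of_anchored hhi (fun j hlo hj => Or.inl ⟨j, hlo, hj, rfl⟩)
      (htop _ hY) (hbot _ hZ) hlo hj
  have hbetween : ∀ j ≤ n,
      X j ∉ Rect ((a : ℤ) - c) 0 c d ∪ Rect (-((a : ℤ) - c)) 0 c d → lo ≤ j ∧ j ≤ hi := by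
    intro j hj hR
    have := mem_Rect.1 (hYin k hk)
    have := mem_Rect.1 (hZin k' hk')
    have := mem_Rect.1 (hXin j hj)
    simp only [Set.mem_union, mem_Rect, not_or] at hR
    constructor <;> by_contra! hlt
    · have := hX.fst_add_snd_lt hlt hlo
      omega
    · have := hX.fst_add_snd_lt hlt hj
      omega
  apply firstEmptyTime_add_one_le
  rintro t hF _ ⟨⟨j, hj, rfl⟩, hR⟩
  obtain ⟨hloj, hjhi⟩ := hbetween j hj hR
  refine iterate_T_eq_true_of_blocked hS ?_ t hF _ ⟨j, hloj, hjhi, rfl⟩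
  rintro _ ⟨j, -, hj, rfl⟩
  exact hXocc j (hj.trans hhi)

theorem mutual_blocking (a b c d : ℕ) (hc : 2 * c < a) (hd : b < d)
    (η : Config) (n m m' : ℕ) (X Y Z : ℕ → Site)
    -- X : occupied NE path spanning R₁ = Rect 0 0 a b
    (hXstep : ∀ i < n, X (i + 1) = X i + e2 ∨ X (i + 1) = X i + e1 + e2)
    (hXin : ∀ i ≤ n, X i ∈ Rect 0 0 a b)
    (hXocc : ∀ i ≤ n, η (X i) = true)
    (hXend0 : (X 0).1 + (X 0).2 = -(a : ℤ)) (hXendn : (X n).1 + (X n).2 = (a : ℤ))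
    -- Y : occupied NW path spanning R₂ = Rect (a−c) 0 c d
    (hYstep : ∀ i < m, Y (i + 1) = Y i - e1 ∨ Y (i + 1) = Y i - e1 + e2)
    (hYin : ∀ i ≤ m, Y i ∈ Rect ((a : ℤ) - c) 0 c d)
    (hYocc : ∀ i ≤ m, η (Y i) = true)
    (hYend0 : (Y 0).2 - (Y 0).1 = -(d : ℤ)) (hYendm : (Y m).2 - (Y m).1 = (d : ℤ))
    -- Z : occupied NW path spanning R₃ = Rect (−(a−c)) 0 c d
    (hZstep : ∀ i < m', Z (i + 1) = Z i - e1 ∨ Z (i + 1) = Z i - e1 + e2)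
    (hZin : ∀ i ≤ m', Z i ∈ Rect (-((a : ℤ) - c)) 0 c d)
    (hZocc : ∀ i ≤ m', η (Z i) = true)
    (hZend0 : (Z 0).2 - (Z 0).1 = -(d : ℤ)) (hZendm : (Z m').2 - (Z m').1 = (d : ℤ)) :
    firstEmptyTime η
        ({p | ∃ i ≤ n, p = X i} \ (Rect ((a : ℤ) - c) 0 c d ∪ Rect (-((a : ℤ) - c)) 0 c d)) ≥
      firstEmptyTime η ({p | ∃ i ≤ m, p = Y i} ∪ {p | ∃ i ≤ m', p = Z i}) + 1 :=
  mutual_blocking_general a b c d hc hd η n m m' X Y Z hXstep hXin hXocc hXend0 hXendn hYstep hYin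
    hYend0 hYendm hZstep hZin hZend0 hZendm
end

section
/- In the mutual-blocking setup, along the portion of the NE spanning path X beyond the blocked segment, the first emptying times are strictly decreasing: if x_u is the last site of X̃ toward R₂ and s_{u+i} denotes the first time x_{u+i} is emptied, then s_{u+i} ≤ s_{u+i−1} − 1 for all 0 < i ≤ n−u (whenever x_u is the first endpoint of X̃ to be emptied). -/
open scoped Classical ENNReal

lemma fet_le {η : Config} {p : Site} {m : ℕ} (h : (T^[m] η) p = false) :
    firstEmptyTime η {p} ≤ (m : ℕ∞) :=
  sInf_le ⟨m, ⟨p, rfl, h⟩, rfl⟩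

lemma fet_spec {η : Config} {p : Site} {t : ℕ} (h : firstEmptyTime η {p} = (t : ℕ∞)) :
    (T^[t] η) p = false ∧ ∀ m < t, (T^[m] η) p = true := by
  have hbef : ∀ m < t, (T^[m] η) p = true := by
    intro m hm
    by_contra hc
    have hf : (T^[m] η) p = false := by
      cases hb : (T^[m] η) p with
      | false => rfl
      | true => exact absurd hb hc
    have := fet_le hf
    rw [h] at this
    exact absurd (Nat.cast_le.mp this) (by omega)
  refine ⟨?_, hbef⟩
  by_contra hc
  have hf : (T^[t] η) p = true := by
    cases hb : (T^[t] η) p with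
    | false => exact absurd hb hc
    | true => rfl
  have hlb : ((t + 1 : ℕ) : ℕ∞) ≤ firstEmptyTime η {p} := by
    apply le_sInf
    rintro b ⟨m, ⟨q, hq, hqf⟩, rfl⟩
    rcases hq with rfl
    have : t + 1 ≤ m := by
      by_contra hmt
      rcases Nat.lt_or_ge m t with hlt | hge
      · rw [hbef m hlt] at hqf; exact absurd hqf (by simp)
      · have : m = t := by omega
        subst this
        rw [hf] at hqf; exact absurd hqf (by simp)
    exact Nat.cast_le.mpr this
  rw [h] at hlb
  have := Nat.cast_le.mp hlb
  omega

lemma step_empty (ξ : Config) (x y z : Site)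
    (hy : y = x + e2 ∨ y = x + e1 + e2) (hz : z = y + e2 ∨ z = y + e1 + e2)
    (hxo : ξ x = true) (hyo : ξ y = true) (hye : T ξ y = false) : ξ z = false := by
  have hcon : constraintA ξ y := by
    by_contra hc
    simp [T, hyo, hc] at hye
  rcases hcon.1 with hne | hsw
  · rcases hz with rfl | rfl
    · exact hne.1
    · exact hne.2
  · exfalso
    rcases hy with rfl | rfl
    · have h1 : (x + e2) - e2 = x := by abel
      rw [h1] at hsw
      rw [hsw.1] at hxo; exact absurd hxo (by simp)
    · have h1 : (x + e1 + e2) - e1 - e2 = x := by abel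
      rw [h1] at hsw
      rw [hsw.2] at hxo; exact absurd hxo (by simp)

theorem decreasing_emptying_times_along_path (η : Config) (n u : ℕ) (X : ℕ → Site)
    (hstep : ∀ i < n, X (i + 1) = X i + e2 ∨ X (i + 1) = X i + e1 + e2)
    (hocc : ∀ i ≤ n, η (X i) = true)
    (hu1 : 1 ≤ u) (hun : u ≤ n) (τ : ℕ) (hτ1 : 1 ≤ τ)
    (hsu : firstEmptyTime η {X u} = (τ : ℕ∞))
    (hpred : (T^[τ - 1] η) (X (u - 1)) = true) :
    ∀ i, 0 < i → u + i ≤ n →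
      firstEmptyTime η {X (u + i)} ≤ firstEmptyTime η {X (u + i - 1)} - 1 := by
  -- key step: if X j empties at time t with predecessor occupied at t-1, then
  -- X (j+1) is empty at time t-1.
  have key : ∀ (j t : ℕ), 1 ≤ j → j < n → 1 ≤ t →
      firstEmptyTime η {X j} = (t : ℕ∞) → (T^[t - 1] η) (X (j - 1)) = true →
      (T^[t - 1] η) (X (j + 1)) = false := by
    intro j t hj hjn ht hfet hprev
    obtain ⟨hft, hbef⟩ := fet_spec hfet
    have hyo : (T^[t - 1] η) (X j) = true := hbef _ (by omega)
    have hye : T (T^[t - 1] η) (X j) = false := by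
      have ht' : t = (t - 1) + 1 := by omega
      rw [ht', Function.iterate_succ_apply'] at hft
      exact hft
    have hy : X j = X (j - 1) + e2 ∨ X j = X (j - 1) + e1 + e2 := by
      have := hstep (j - 1) (by omega)
      have hj1 : j - 1 + 1 = j := by omega
      rw [hj1] at this
      exact this
    have hz := hstep j hjn
    exact step_empty (T^[t - 1] η) (X (j - 1)) (X j) (X (j + 1)) hy hz hprev hyo hye
  -- claim C i : first-empty time of X (u+i) is a finite t ≥ 1 with predecessor
  -- occupied at time t-1.
  have C : ∀ i, u + i ≤ n → ∃ t : ℕ, 1 ≤ t ∧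
      firstEmptyTime η {X (u + i)} = (t : ℕ∞) ∧
      (T^[t - 1] η) (X (u + i - 1)) = true := by
    intro i
    induction i with
    | zero => intro _; exact ⟨τ, hτ1, by simpa using hsu, by simpa using hpred⟩
    | succ i ih =>
      intro hin
      obtain ⟨t, ht1, hfet, hprev⟩ := ih (by omega)
      have hempty : (T^[t - 1] η) (X (u + i + 1)) = false :=
        key (u + i) t (by omega) (by omega) ht1 hfet hprev
      have hle : firstEmptyTime η {X (u + i + 1)} ≤ ((t - 1 : ℕ) : ℕ∞) := fet_le hempty
      have hne : firstEmptyTime η {X (u + i + 1)} ≠ ⊤ :=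
        ne_top_of_le_ne_top (WithTop.natCast_ne_top _) hle
      obtain ⟨t', ht'⟩ : ∃ t' : ℕ, firstEmptyTime η {X (u + i + 1)} = (t' : ℕ∞) := by
        rcases (WithTop.ne_top_iff_exists.mp hne) with ⟨t', ht'⟩
        exact ⟨t', ht'.symm⟩
      have ht'le : t' ≤ t - 1 := by rw [ht'] at hle; exact_mod_cast hle
      have ht'1 : 1 ≤ t' := by
        by_contra hc
        have : t' = 0 := by omega
        subst this
        have := (fet_spec ht').1
        simp at this
        rw [hocc (u + i + 1) hin] at this
        exact absurd this (by simp)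
      have hprev' : (T^[t' - 1] η) (X (u + i + 1 - 1)) = true := by
        have := (fet_spec hfet).2 (t' - 1) (by omega)
        simpa using this
      exact ⟨t', ht'1, ht', hprev'⟩
  intro i hi hin
  obtain ⟨t, ht1, hfet, hprev⟩ := C (i - 1) (by omega)
  have heq1 : u + (i - 1) = u + i - 1 := by omega
  rw [heq1] at hfet hprev
  have heq2 : u + i - 1 - 1 = u + i - 1 - 1 := rfl
  have hempty : (T^[t - 1] η) (X (u + i - 1 + 1)) = false :=
    key (u + i - 1) t (by omega) (by omega) ht1 hfet hprev
  have heq3 : u + i - 1 + 1 = u + i := by omega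
  rw [heq3] at hempty
  have hle : firstEmptyTime η {X (u + i)} ≤ ((t - 1 : ℕ) : ℕ∞) := fet_le hempty
  rw [hfet]
  refine hle.trans (le_of_eq ?_)
  norm_cast
end
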